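/- Let E > 0, c ∈ ℂ, and suppose that for all λ, λ' on the unit circle T and all t ∈ ℝ one has f(λ,λ')·exp[(i/2)√E·t·(λc̄ + c/λ - λ'c̄ - c/λ')] = f(λ,λ')·exp[i E^{3/2} t (λ³ + λ⁻³ - (λ')³ - (λ')⁻³)], where f : T × T → ℂ is continuous. Then f ≡ 0 on T × T. -/

import Mathlib

/-!
Where `f(λ, λ') ≠ 0` the two exponentials agree for every `t`, so their exponents agree; this says
that the phase `φ(z) = E^{3/2}(z³ + z⁻³) - (√E/2)(z c̄ + c z⁻¹)` takes the same value at `λ` and `λ'`.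
Multiplied by `z³`, the equation `φ(z) = φ(λ')` becomes a polynomial equation of degree 6 with
leading coefficient `E^{3/2} ≠ 0`, so for fixed `λ'` the open set `{λ | f(λ, λ') ≠ 0}` is finite. The circle
is connected and has more than one point, hence no isolated points, so that set is empty.
-/
open Complex ComplexConjugate Polynomial Filter Topology

theorem Set.Finite.eq_empty_of_isOpen {X : Type*} [TopologicalSpace X] [T0Space X]
    [∀ x : X, NeBot (𝓝[≠] x)] {s : Set X} (hfin : s.Finite) (ho : IsOpen s) : s = ∅ := by
  by_contra hne
  obtain ⟨x, -, hx⟩ :=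
    exists_isOpen_singleton_of_isOpen_finite hfin (Set.nonempty_iff_ne_empty.2 hne) ho
  exact NeBot.ne' ((isOpen_singleton_iff_punctured_nhds x).1 hx)

instance : ConnectedSpace (Metric.sphere (0 : ℂ) 1) :=
  isConnected_iff_connectedSpace.1 <|
    isConnected_sphere (by simp [Complex.rank_real_complex]) 0 zero_le_one

instance : Nontrivial (Metric.sphere (0 : ℂ) 1) :=
  nontrivial_of_ne ⟨1, by simp⟩ ⟨-1, by simp⟩ fun h => by norm_num [Subtype.ext_iff] at h

theorem eq_of_forall_exp_ofReal_mul_eq {a b : ℂ} (h : ∀ t : ℝ, exp (t * a) = exp (t * b)) :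
    a = b := by
  have hexp (u : ℂ) : HasDerivAt (fun t : ℝ => exp (t * u)) u 0 := by
    simpa using ((hasDerivAt_id (0 : ℝ)).ofReal_comp.mul_const u).cexp
  exact (hexp a).unique (funext h ▸ hexp b)

theorem finite_setOf_laurent_eq {s : ℂ} (hs : s ≠ 0) (a b K : ℂ) :
    {z : ℂ | z ≠ 0 ∧ s * (z ^ 3 + z⁻¹ ^ 3) - a * z - b * z⁻¹ = K}.Finite := by
  set P : ℂ[X] := C s * X ^ 6 - C a * X ^ 4 - C K * X ^ 3 - C b * X ^ 2 + C s
  have hP : P ≠ 0 := fun h0 => hs <| by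
    simpa [P, coeff_X_pow, coeff_C] using congrArg (coeff · 6) h0
  refine (finite_setOfPred_isRoot hP).subset ?_
  rintro z ⟨hz, hzK⟩
  have hPz : P.eval z = z ^ 3 * (s * (z ^ 3 + z⁻¹ ^ 3) - a * z - b * z⁻¹ - K) := by
    simp only [P, eval_add, eval_sub, eval_mul, eval_C, eval_pow, eval_X]
    field_simp
    ring
  rw [Set.mem_ofPred_eq, IsRoot.def, hPz, hzK, sub_self, mul_zero]

noncomputable def travelWavePhase (E : ℝ) (c z : ℂ) : ℂ :=
  ((E ^ ((3 : ℝ) / 2) : ℝ) : ℂ) * (z ^ 3 + z⁻¹ ^ 3) - (Real.sqrt E / 2 * conj c) * z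
    - (Real.sqrt E / 2 * c) * z⁻¹

theorem travelWavePhase_eq_of_forall_exp_eq {E : ℝ} {c z w : ℂ}
    (h : ∀ t : ℝ, exp (I / 2 * (Real.sqrt E : ℂ) * t * (z * conj c + c / z - w * conj c - c / w))
      = exp (I * ((E ^ ((3 : ℝ) / 2) : ℝ) : ℂ) * t * (z ^ 3 + z⁻¹ ^ 3 - w ^ 3 - w⁻¹ ^ 3))) :
    travelWavePhase E c z = travelWavePhase E c w := by
  set s : ℂ := ((E ^ ((3 : ℝ) / 2) : ℝ) : ℂ)
  set r : ℂ := Real.sqrt E / 2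
  have hexp := eq_of_forall_exp_ofReal_mul_eq
    (a := I * r * (z * conj c + c / z - w * conj c - c / w))
    (b := I * s * (z ^ 3 + z⁻¹ ^ 3 - w ^ 3 - w⁻¹ ^ 3))
    fun t => by convert h t using 2 <;> ring
  unfold travelWavePhase
  linear_combination I * hexp
    + (s * (z ^ 3 + z⁻¹ ^ 3 - w ^ 3 - w⁻¹ ^ 3) - r * (z * conj c + c / z - w * conj c - c / w)) * I_sq

theorem finite_setOf_travelWavePhase_eq {E : ℝ} (hE : 0 < E) (c K : ℂ) :
    {z : ℂ | z ≠ 0 ∧ travelWavePhase E c z = K}.Finite :=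
  finite_setOf_laurent_eq (ofReal_ne_zero.2 (Real.rpow_pos_of_pos hE _).ne') _ _ K

/-- If a continuous `f` on `T × T` (`T` the unit circle) satisfies, for all `t ∈ ℝ`,
`f(λ,λ')·exp[(i/2)√E·t·(λc̄ + c/λ - λ'c̄ - c/λ')]
  = f(λ,λ')·exp[iE^{3/2}t(λ³ + λ⁻³ - λ'³ - λ'⁻³)]` with `E > 0`, then `f ≡ 0`. -/
theorem scattering_amplitude_vanishes
    (E : ℝ) (hE : 0 < E) (c : ℂ)
    (f : Metric.sphere (0 : ℂ) 1 × Metric.sphere (0 : ℂ) 1 → ℂ)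
    (hf : Continuous f)
    (h : ∀ (l l' : Metric.sphere (0 : ℂ) 1) (t : ℝ),
      f (l, l') * Complex.exp (Complex.I / 2 * (Real.sqrt E : ℂ) * (t : ℂ) *
          ((l : ℂ) * (starRingEnd ℂ) c + c / (l : ℂ)
            - (l' : ℂ) * (starRingEnd ℂ) c - c / (l' : ℂ)))
        = f (l, l') * Complex.exp (Complex.I * ((E ^ ((3 : ℝ) / 2) : ℝ) : ℂ) * (t : ℂ) *
          ((l : ℂ) ^ 3 + ((l : ℂ))⁻¹ ^ 3 - (l' : ℂ) ^ 3 - ((l' : ℂ))⁻¹ ^ 3))) :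
    ∀ p, f p = 0 := by
  rintro ⟨l, l'⟩
  set S : Set (Metric.sphere (0 : ℂ) 1) := {x | f (x, l') ≠ 0}
  have hS_open : IsOpen S := isOpen_ne_fun (hf.comp (Continuous.prodMk_left l')) continuous_const
  have hS_finite : S.Finite := by
    refine ((finite_setOf_travelWavePhase_eq hE c (travelWavePhase E c l')).preimage
      Subtype.val_injective.injOn).subset fun x hx => ⟨ne_zero_of_mem_unit_sphere x, ?_⟩
    exact travelWavePhase_eq_of_forall_exp_eq fun t => mul_left_cancel₀ hx (h x l' t)
  by_contra hl
  exact (hS_finite.eq_empty_of_isOpen hS_open).subset hl
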